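/- As θ → 0, for fixed z and σ > 0, P_θ(σ) = σF_1(z/σ) + (σ²√θ/2)F_2(z/σ) + (σ³θ/6)F_3(z/σ) + o(θ), where F_1(x) = xΦ(x)+φ(x), F_2(x) = x²Φ(x)+xφ(x), F_3(x) = x³Φ(x) + (x² − 1/4)φ(x). -/

import Mathlib

open Real Set Filter Topology Asymptotics

noncomputable def stdNormalPdf (x : ℝ) : ℝ := (Real.sqrt (2 * π))⁻¹ * Real.exp (-x^2 / 2)
noncomputable def stdNormalCdf (x : ℝ) : ℝ := ∫ t in Iic x, stdNormalPdf t

/-- Normalized Black–Scholes put price with log-moneyness `√θ z` and volatility `σ`. -/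
noncomputable def bsPut (z θ σ : ℝ) : ℝ :=
  (1 / Real.sqrt θ) *
    (stdNormalCdf (z / σ + σ * Real.sqrt θ / 2) * Real.exp (Real.sqrt θ * z)
      - stdNormalCdf (z / σ - σ * Real.sqrt θ / 2))

noncomputable def F₁ (x : ℝ) : ℝ := x * stdNormalCdf x + stdNormalPdf x
noncomputable def F₂ (x : ℝ) : ℝ := x^2 * stdNormalCdf x + x * stdNormalPdf x
noncomputable def F₃ (x : ℝ) : ℝ := x^3 * stdNormalCdf x + (x^2 - 1/4) * stdNormalPdf x


/-!
Write `x = z / σ` and `u = σ √θ`; then `P_θ(σ) = G(u) / √θ` with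
`G(u) = Φ(x + u/2) e^{xu} - Φ(x - u/2)` and `G(0) = 0`. Because
`φ(x + u/2) e^{xu} = φ(x - u/2)`, each derivative of `G` is again of the form
`q(u) φ(x - u/2) + c Φ(x + u/2) e^{xu}` with `q` a polynomial, and at `u = 0` the first three are
`F₁(x)`, `F₂(x)`, `F₃(x)`. Taylor's theorem at order three gives `G(u) = F₁ u + F₂ u²/2 + F₃ u³/6
+ o(u³)`, and dividing by `√θ` turns `o(u³)` into `o(θ)`.
-/

open MeasureTheory

theorem hasDerivAt_integral_Iic {E : Type*} [NormedAddCommGroup E] [NormedSpace ℝ E]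
    [CompleteSpace E] {f : ℝ → E} (hfi : Integrable f) (hfc : Continuous f) (x : ℝ) :
    HasDerivAt (fun u => ∫ t in Iic u, f t) (f x) x := by
  have hsplit : ∀ u, (∫ t in Iic 0, f t) + ∫ t in (0 : ℝ)..u, f t = ∫ t in Iic u, f t :=
    fun u => by
      rw [← intervalIntegral.integral_Iic_sub_Iic hfi.integrableOn hfi.integrableOn]; abel
  have := (intervalIntegral.integral_hasDerivAt_right (a := 0) (b := x) hfi.intervalIntegrable
    (hfc.stronglyMeasurableAtFilter _ _) hfc.continuousAt).const_add (∫ t in Iic 0, f t)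
  simpa only [hsplit] using this

theorem isLittleO_pow_succ_of_hasDerivAt {E : Type*} [NormedAddCommGroup E] [NormedSpace ℝ E]
    {f f' : ℝ → E} {n : ℕ} (hf : ∀ x, HasDerivAt f (f' x) x) (hf' : f' =o[𝓝 0] (· ^ n)) :
    (fun x => f x - f 0) =o[𝓝 0] (· ^ (n + 1)) := by
  simpa using convex_univ.isLittleO_pow_succ_real (mem_univ 0)
    (fun x _ => (hf x).hasDerivWithinAt) (by simpa using hf')

theorem isLittleO_sub_taylor_three {f f₁ f₂ f₃ : ℝ → ℝ} (h₁ : ∀ s, HasDerivAt f (f₁ s) s)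
    (h₂ : ∀ s, HasDerivAt f₁ (f₂ s) s) (h₃ : ∀ s, HasDerivAt f₂ (f₃ s) s)
    (hf₃ : ContinuousAt f₃ 0) :
    (fun s => f s - (f 0 + f₁ 0 * s + f₂ 0 * s ^ 2 / 2 + f₃ 0 * s ^ 3 / 6)) =o[𝓝 0] (· ^ 3) := by
  set a := f₁ 0
  set b := f₂ 0
  set c := f₃ 0
  have hp₁ : ∀ s, HasDerivAt (fun s => c * s) c s := fun s => by
    simpa using (hasDerivAt_id s).const_mul c
  have hp₂ : ∀ s, HasDerivAt (fun s => b * s + c * s ^ 2 / 2) (b + c * s) s := fun s =>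
    (((hasDerivAt_id s).const_mul b).add
      (((hasDerivAt_pow 2 s).const_mul c).div_const 2)).congr_deriv (by push_cast; ring)
  have hp₃ : ∀ s, HasDerivAt (fun s => a * s + b * s ^ 2 / 2 + c * s ^ 3 / 6)
      (a + b * s + c * s ^ 2 / 2) s := fun s =>
    ((((hasDerivAt_id s).const_mul a).add (((hasDerivAt_pow 2 s).const_mul b).div_const 2)).add
      (((hasDerivAt_pow 3 s).const_mul c).div_const 6)).congr_deriv (by push_cast; ring)
  have r₃ : (fun s => f₃ s - c) =o[𝓝 0] (· ^ 0) := by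
    simpa [isLittleO_one_iff] using tendsto_sub_nhds_zero_iff.2 hf₃
  have r₂ : (fun s => f₂ s - (b + c * s)) =o[𝓝 0] (· ^ 1) :=
    (isLittleO_pow_succ_of_hasDerivAt (fun s => (h₃ s).sub (hp₁ s)) r₃).congr_left
      fun s => by simp only [Pi.sub_apply]; ring
  have r₁ : (fun s => f₁ s - (a + b * s + c * s ^ 2 / 2)) =o[𝓝 0] (· ^ 2) :=
    (isLittleO_pow_succ_of_hasDerivAt (fun s => (h₂ s).sub (hp₂ s)) r₂).congr_left
      fun s => by simp only [Pi.sub_apply]; ring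
  exact (isLittleO_pow_succ_of_hasDerivAt (fun s => (h₁ s).sub (hp₃ s)) r₁).congr_left
    fun s => by simp only [Pi.sub_apply]; ring

@[fun_prop]
theorem continuous_stdNormalPdf : Continuous stdNormalPdf := by
  unfold stdNormalPdf; fun_prop

theorem integrable_stdNormalPdf : Integrable stdNormalPdf := by
  refine ((integrable_exp_neg_mul_sq (b := 1 / 2) (by norm_num)).const_mul
    (√(2 * π))⁻¹).congr (.of_forall fun x => ?_)
  simp only [stdNormalPdf]; ring_nf

theorem hasDerivAt_stdNormalCdf (x : ℝ) : HasDerivAt stdNormalCdf (stdNormalPdf x) x :=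
  hasDerivAt_integral_Iic integrable_stdNormalPdf continuous_stdNormalPdf x

@[fun_prop]
theorem continuous_stdNormalCdf : Continuous stdNormalCdf :=
  continuous_iff_continuousAt.2 fun x => (hasDerivAt_stdNormalCdf x).continuousAt

theorem hasDerivAt_stdNormalPdf (x : ℝ) : HasDerivAt stdNormalPdf (-x * stdNormalPdf x) x := by
  have hexp := ((hasDerivAt_pow 2 x).neg.div_const 2).exp.const_mul (√(2 * π))⁻¹
  exact hexp.congr_deriv (by simp only [stdNormalPdf, Pi.neg_apply]; push_cast; ring)

theorem stdNormalPdf_add_half_mul_exp (x u : ℝ) :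
    stdNormalPdf (x + u / 2) * exp (x * u) = stdNormalPdf (x - u / 2) := by
  simp only [stdNormalPdf, mul_assoc, ← exp_add]
  ring_nf

section
variable (x : ℝ)

theorem hasDerivAt_stdNormalCdf_mul_exp (u : ℝ) :
    HasDerivAt (fun u => stdNormalCdf (x + u / 2) * exp (x * u))
      (stdNormalPdf (x - u / 2) / 2 + x * (stdNormalCdf (x + u / 2) * exp (x * u))) u := by
  have hcdf := (hasDerivAt_stdNormalCdf _).comp u (((hasDerivAt_id u).div_const 2).const_add x)
  have hexp := ((hasDerivAt_id u).const_mul x).exp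
  refine (hcdf.mul hexp).congr_deriv ?_
  rw [← stdNormalPdf_add_half_mul_exp]
  simp only [Function.comp, id]
  ring

theorem hasDerivAt_mul_stdNormalPdf_add_mul_cdf_exp {q : ℝ → ℝ} {q' u : ℝ} (c : ℝ)
    (hq : HasDerivAt q q' u) :
    HasDerivAt
      (fun u => q u * stdNormalPdf (x - u / 2) + c * (stdNormalCdf (x + u / 2) * exp (x * u)))
      ((q' + q u * (x - u / 2) / 2 + c / 2) * stdNormalPdf (x - u / 2)
        + c * x * (stdNormalCdf (x + u / 2) * exp (x * u))) u := by
  have hpdf := (hasDerivAt_stdNormalPdf _).comp u (((hasDerivAt_id u).div_const 2).const_sub x)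
  refine ((hq.mul hpdf).add ((hasDerivAt_stdNormalCdf_mul_exp x u).const_mul c)).congr_deriv ?_
  simp only [Function.comp, id]
  ring

end

noncomputable def bsPutNumerator (x u : ℝ) : ℝ :=
  stdNormalCdf (x + u / 2) * exp (x * u) - stdNormalCdf (x - u / 2)

theorem hasDerivAt_bsPutNumerator (x u : ℝ) :
    HasDerivAt (bsPutNumerator x)
      (stdNormalPdf (x - u / 2) + x * (stdNormalCdf (x + u / 2) * exp (x * u))) u := by
  have hcdf := (hasDerivAt_stdNormalCdf _).comp u (((hasDerivAt_id u).div_const 2).const_sub x)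
  refine ((hasDerivAt_stdNormalCdf_mul_exp x u).sub hcdf).congr_deriv ?_
  simp only [id]
  ring

theorem bsPutNumerator_sub_taylor_isLittleO (x : ℝ) :
    (fun u => bsPutNumerator x u - (F₁ x * u + F₂ x * u ^ 2 / 2 + F₃ x * u ^ 3 / 6))
      =o[𝓝 0] (· ^ 3) := by
  have h₂ (u : ℝ) : HasDerivAt
      (fun u => stdNormalPdf (x - u / 2) + x * (stdNormalCdf (x + u / 2) * exp (x * u)))
      ((x - u / 4) * stdNormalPdf (x - u / 2) + x ^ 2 * (stdNormalCdf (x + u / 2) * exp (x * u)))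
      u := by
    convert hasDerivAt_mul_stdNormalPdf_add_mul_cdf_exp x x (hasDerivAt_const u (1 : ℝ)) using 1
    · simp only [one_mul]
    · ring
  have h₃ (u : ℝ) := hasDerivAt_mul_stdNormalPdf_add_mul_cdf_exp x (x ^ 2)
    (((hasDerivAt_id u).div_const 4).const_sub x)
  have hc : Continuous fun u => (-(1 / 4) + (x - u / 4) * (x - u / 2) / 2 + x ^ 2 / 2) *
      stdNormalPdf (x - u / 2) + x ^ 2 * x * (stdNormalCdf (x + u / 2) * exp (x * u)) := by
    fun_prop
  refine (isLittleO_sub_taylor_three (hasDerivAt_bsPutNumerator x) h₂ h₃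
    hc.continuousAt).congr_left fun u => ?_
  simp only [bsPutNumerator, F₁, F₂, F₃, zero_div, add_zero, mul_zero, exp_zero, mul_one,
    sub_zero, sub_self, zero_add, one_div, id_eq, sub_right_inj]
  ring

theorem bsPut_eq_bsPutNumerator_div {σ : ℝ} (hσ : σ ≠ 0) (z θ : ℝ) :
    bsPut z θ σ = bsPutNumerator (z / σ) (σ * √θ) / √θ := by
  have hexp : z / σ * (σ * √θ) = √θ * z := by field_simp
  simp only [bsPut, bsPutNumerator, hexp]
  ring

theorem isLittleO_comp_mul_sqrt_div_sqrt {g : ℝ → ℝ} (σ : ℝ) (hg : g =o[𝓝 0] (· ^ 3)) :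
    (fun θ => g (σ * √θ) / √θ) =o[𝓝[>] 0] fun θ => θ := by
  have ht : Tendsto (fun θ => σ * √θ) (𝓝[>] 0) (𝓝 0) := by
    simpa using ((continuous_sqrt.const_mul σ).tendsto 0).mono_left nhdsWithin_le_nhds
  have hcube : (fun θ => (σ * √θ) ^ 3 * (√θ)⁻¹) =O[𝓝[>] 0] fun θ => θ := by
    refine (isBigO_const_mul_self (σ ^ 3) _ _).congr' ?_ .rfl
    filter_upwards [self_mem_nhdsWithin] with θ hθ
    obtain ⟨s, hs, rfl⟩ : ∃ s > 0, θ = s ^ 2 := ⟨√θ, sqrt_pos.2 hθ, (sq_sqrt hθ.le).symm⟩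
    rw [sqrt_sq hs.le]
    field_simp
  simpa only [div_eq_mul_inv, Function.comp_def] using
    ((hg.comp_tendsto ht).mul_isBigO (isBigO_refl (fun θ => (√θ)⁻¹) _)).trans_isBigO hcube

theorem bsPut_small_time_expansion (z σ : ℝ) (hσ : 0 < σ) :
    (fun θ : ℝ => bsPut z θ σ -
        (σ * F₁ (z / σ) + σ^2 * Real.sqrt θ / 2 * F₂ (z / σ)
          + σ^3 * θ / 6 * F₃ (z / σ)))
      =o[𝓝[>] 0] (fun θ : ℝ => θ) := by
  refine (isLittleO_comp_mul_sqrt_div_sqrt σ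
    (bsPutNumerator_sub_taylor_isLittleO (z / σ))).congr' ?_ .rfl
  filter_upwards [self_mem_nhdsWithin] with θ hθ
  obtain ⟨s, hs, rfl⟩ : ∃ s > 0, θ = s ^ 2 := ⟨√θ, sqrt_pos.2 hθ, (sq_sqrt hθ.le).symm⟩
  rw [bsPut_eq_bsPutNumerator_div hσ.ne', sqrt_sq hs.le]
  field_simp
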